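/- Let f, g : ℝ^d → ℂ be of the form ε^{−d/4} q((x−x_0)/√ε) e^{−c|x−x_0|²/ε} with q polynomial and c > 0, normalized so that ∫|f|² = ∫|g|² = 1, and denote by f^ε, g^ε their restrictions to (εℤ)^d. Then Σ_{x ∈ (εℤ)^d} conj(f^ε(x)) g^ε(x) = ε^{−d} ( ∫_{ℝ^d} conj(f) g dx + O(√ε) ) as ε → 0. -/

import Mathlib

/-!
After the substitution `y = (x - x₀) / √ε`, the summand `conj (f ε x) * g ε x` becomes
`ε^{-d/2} H(y)` for the fixed profile `H(y) = conj (q_f y) q_g y e^{-2c|y|²}`, and the lattice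
`(εℤ)^d` becomes the shifted lattice `√ε ℤ^d - x₀/√ε`. The claim is then a Riemann-sum estimate
for `H` with mesh `δ = √ε`, uniform in the shift: on each cube of side `δ` the mean value theorem
compares `H` at the corner with `H` on the cube, with error `δ √d` times a Gaussian that dominates
`‖DH‖` near the cube, and these Gaussians sum to a finite integral.
-/

open Real MeasureTheory Filter Complex
open scoped Topology ComplexConjugate

noncomputable def latticePt (d : ℕ) (ε : ℝ) (z : Fin d → ℤ) : EuclideanSpace ℝ (Fin d) :=
  (EuclideanSpace.equiv (Fin d) ℝ).symm fun i => ε * z i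

@[simp]
lemma latticePt_apply (d : ℕ) (ε : ℝ) (z : Fin d → ℤ) (i : Fin d) :
    latticePt d ε z i = ε * z i := rfl

section RiemannSum

variable {d : ℕ} {F : Type*} [NormedAddCommGroup F]

def latticeCube (d : ℕ) (δ : ℝ) (b : EuclideanSpace ℝ (Fin d)) (z : Fin d → ℤ) :
    Set (EuclideanSpace ℝ (Fin d)) :=
  (MeasurableEquiv.toLp 2 (Fin d → ℝ)).symm ⁻¹'
    Set.univ.pi fun i => Set.Ico (δ * z i - b i) (δ * z i - b i + δ)

lemma mem_latticeCube_iff {δ : ℝ} (hδ : 0 < δ) {b y : EuclideanSpace ℝ (Fin d)}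
    {z : Fin d → ℤ} : y ∈ latticeCube d δ b z ↔ (fun i => ⌊(y i + b i) / δ⌋) = z := by
  simp only [latticeCube, Set.mem_preimage, Set.mem_pi, Set.mem_univ, true_implies, Set.mem_Ico,
    MeasurableEquiv.coe_toLp_symm, funext_iff, Int.floor_eq_iff, le_div_iff₀ hδ,
    div_lt_iff₀ hδ]
  refine forall_congr' fun i => ?_
  constructor <;> rintro ⟨h₁, h₂⟩ <;> constructor <;> linarith

lemma iUnion_latticeCube {δ : ℝ} (hδ : 0 < δ) (b : EuclideanSpace ℝ (Fin d)) :
    ⋃ z, latticeCube d δ b z = Set.univ :=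
  Set.eq_univ_of_forall fun _ => Set.mem_iUnion.2 ⟨_, (mem_latticeCube_iff hδ).2 rfl⟩

lemma pairwise_disjoint_latticeCube {δ : ℝ} (hδ : 0 < δ) (b : EuclideanSpace ℝ (Fin d)) :
    Pairwise (Function.onFun Disjoint (latticeCube d δ b)) := fun _ _ hne =>
  Set.disjoint_left.2 fun _ hy hy' =>
    hne (((mem_latticeCube_iff hδ).1 hy).symm.trans ((mem_latticeCube_iff hδ).1 hy'))

lemma measurableSet_latticeCube (δ : ℝ) (b : EuclideanSpace ℝ (Fin d)) (z : Fin d → ℤ) :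
    MeasurableSet (latticeCube d δ b z) :=
  (MeasurableEquiv.toLp 2 (Fin d → ℝ)).symm.measurable
    (MeasurableSet.univ_pi fun _ => measurableSet_Ico)

lemma volume_latticeCube {δ : ℝ} (hδ : 0 ≤ δ) (b : EuclideanSpace ℝ (Fin d)) (z : Fin d → ℤ) :
    volume (latticeCube d δ b z) = ENNReal.ofReal (δ ^ d) := by
  rw [latticeCube, (EuclideanSpace.volume_preserving_symm_measurableEquiv_toLp
    (Fin d)).measure_preimage (MeasurableSet.univ_pi fun _ => measurableSet_Ico).nullMeasurableSet,
    volume_pi_pi]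
  simp [Real.volume_Ico, ENNReal.ofReal_pow hδ]

lemma norm_sub_latticePt_le {δ : ℝ} (hδ : 0 < δ) {b y : EuclideanSpace ℝ (Fin d)}
    {z : Fin d → ℤ} (hy : y ∈ latticeCube d δ b z) :
    ‖y - (latticePt d δ z - b)‖ ≤ δ * √d := by
  have hcoord : ∀ i, ‖(y - (latticePt d δ z - b)) i‖ ^ 2 ≤ δ ^ 2 := by
    intro i
    obtain ⟨h₁, h₂⟩ := (Set.mem_univ_pi.1 hy) i
    simp only [MeasurableEquiv.coe_toLp_symm] at h₁ h₂
    rw [PiLp.sub_apply, PiLp.sub_apply, latticePt_apply, Real.norm_eq_abs, sq_abs]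
    nlinarith
  calc ‖y - (latticePt d δ z - b)‖ = √(∑ i, ‖(y - (latticePt d δ z - b)) i‖ ^ 2) :=
        EuclideanSpace.norm_eq _
    _ ≤ √(∑ _i : Fin d, δ ^ 2) := Real.sqrt_le_sqrt (Finset.sum_le_sum fun i _ => hcoord i)
    _ = δ * √d := by
        rw [Finset.sum_const, Finset.card_univ, Fintype.card_fin, nsmul_eq_mul,
          Real.sqrt_mul (Nat.cast_nonneg d), Real.sqrt_sq hδ.le, mul_comm]

lemma measureReal_latticeCube {δ : ℝ} (hδ : 0 ≤ δ) (b : EuclideanSpace ℝ (Fin d))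
    (z : Fin d → ℤ) : volume.real (latticeCube d δ b z) = δ ^ d := by
  rw [measureReal_def, volume_latticeCube hδ, ENNReal.toReal_ofReal (by positivity)]

lemma hasSum_setIntegral_latticeCube [NormedSpace ℝ F] [CompleteSpace F]
    {f : EuclideanSpace ℝ (Fin d) → F} (hf : Integrable f) {δ : ℝ} (hδ : 0 < δ)
    (b : EuclideanSpace ℝ (Fin d)) :
    HasSum (fun z => ∫ y in latticeCube d δ b z, f y) (∫ y, f y) := by
  have := hasSum_integral_iUnion (measurableSet_latticeCube δ b)
    (pairwise_disjoint_latticeCube hδ b) hf.integrableOn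
  rwa [iUnion_latticeCube hδ, Measure.restrict_univ] at this

lemma summable_latticePt_sub [CompleteSpace F] {h : EuclideanSpace ℝ (Fin d) → F}
    {w : EuclideanSpace ℝ (Fin d) → ℝ} (hw : Integrable w)
    (hbound : ∀ x y, ‖x - y‖ ≤ √d → ‖h x‖ ≤ w y) {δ : ℝ} (hδ : 0 < δ) (hδ1 : δ ≤ 1)
    (b : EuclideanSpace ℝ (Fin d)) : Summable fun z => h (latticePt d δ z - b) := by
  refine .of_norm_bounded
    ((hasSum_setIntegral_latticeCube hw hδ b).summable.mul_left (δ ^ d)⁻¹) fun z => ?_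
  rw [le_inv_mul_iff₀ (by positivity), ← measureReal_latticeCube hδ.le b z, ← smul_eq_mul,
    ← setIntegral_const]
  refine setIntegral_mono_on (integrableOn_const (by simp [volume_latticeCube hδ.le]))
    hw.integrableOn (measurableSet_latticeCube δ b z) fun y hy => hbound _ y ?_
  rw [norm_sub_rev]
  exact (norm_sub_latticePt_le hδ hy).trans (mul_le_of_le_one_left (Real.sqrt_nonneg _) hδ1)

lemma norm_sub_le_of_mem_latticeCube [NormedSpace ℝ F] {h : EuclideanSpace ℝ (Fin d) → F}
    {w : EuclideanSpace ℝ (Fin d) → ℝ} (hh : Differentiable ℝ h)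
    (hderiv : ∀ x y, ‖x - y‖ ≤ √d → ‖fderiv ℝ h x‖ ≤ w y) {δ : ℝ} (hδ : 0 < δ) (hδ1 : δ ≤ 1)
    {b y : EuclideanSpace ℝ (Fin d)} {z : Fin d → ℤ} (hy : y ∈ latticeCube d δ b z) :
    ‖h (latticePt d δ z - b) - h y‖ ≤ δ * √d * w y := by
  have hball : ∀ x ∈ Metric.closedBall y (δ * √d), ‖fderiv ℝ h x‖ ≤ w y := fun x hx =>
    hderiv x y ((mem_closedBall_iff_norm.1 hx).trans
      (mul_le_of_le_one_left (Real.sqrt_nonneg _) hδ1))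
  have hcorner : ‖latticePt d δ z - b - y‖ ≤ δ * √d := by
    rw [norm_sub_rev]; exact norm_sub_latticePt_le hδ hy
  calc ‖h (latticePt d δ z - b) - h y‖ ≤ w y * ‖latticePt d δ z - b - y‖ :=
        (convex_closedBall y _).norm_image_sub_le_of_norm_fderiv_le (fun x _ => hh x) hball
          (Metric.mem_closedBall_self (by positivity)) (mem_closedBall_iff_norm.2 hcorner)
    _ ≤ w y * (δ * √d) := by
        gcongr
        exact (norm_nonneg _).trans (hball y (Metric.mem_closedBall_self (by positivity)))
    _ = δ * √d * w y := mul_comm _ _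

lemma norm_smul_sub_setIntegral_latticeCube_le [NormedSpace ℝ F] [CompleteSpace F]
    {h : EuclideanSpace ℝ (Fin d) → F} {w : EuclideanSpace ℝ (Fin d) → ℝ}
    (hh : Differentiable ℝ h) (hhi : Integrable h) (hw : Integrable w)
    (hderiv : ∀ x y, ‖x - y‖ ≤ √d → ‖fderiv ℝ h x‖ ≤ w y) {δ : ℝ} (hδ : 0 < δ) (hδ1 : δ ≤ 1)
    (b : EuclideanSpace ℝ (Fin d)) (z : Fin d → ℤ) :
    ‖δ ^ d • h (latticePt d δ z - b) - ∫ y in latticeCube d δ b z, h y‖ ≤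
      δ * √d * ∫ y in latticeCube d δ b z, w y := by
  have hconst : IntegrableOn (fun _ => h (latticePt d δ z - b)) (latticeCube d δ b z) :=
    integrableOn_const (by simp [volume_latticeCube hδ.le])
  rw [← measureReal_latticeCube hδ.le b z, ← setIntegral_const,
    ← integral_sub hconst hhi.integrableOn, ← integral_const_mul]
  exact (norm_integral_le_integral_norm _).trans <|
    setIntegral_mono_on (hconst.sub hhi.integrableOn).norm (hw.integrableOn.const_mul _)
      (measurableSet_latticeCube δ b z) fun y hy =>
        norm_sub_le_of_mem_latticeCube hh hderiv hδ hδ1 hy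

theorem norm_smul_tsum_latticePt_sub_integral_le [NormedSpace ℝ F] [CompleteSpace F]
    {h : EuclideanSpace ℝ (Fin d) → F} {w : EuclideanSpace ℝ (Fin d) → ℝ}
    (hh : Differentiable ℝ h) (hw : Integrable w)
    (hbound : ∀ x y, ‖x - y‖ ≤ √d → ‖h x‖ ≤ w y)
    (hderiv : ∀ x y, ‖x - y‖ ≤ √d → ‖fderiv ℝ h x‖ ≤ w y) {δ : ℝ} (hδ : 0 < δ) (hδ1 : δ ≤ 1)
    (b : EuclideanSpace ℝ (Fin d)) :
    ‖δ ^ d • ∑' z, h (latticePt d δ z - b) - ∫ y, h y‖ ≤ δ * √d * ∫ y, w y := by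
  have hhi : Integrable h := hw.mono' hh.continuous.aestronglyMeasurable
    (ae_of_all _ fun y => hbound y y (by simp))
  refine HasSum.norm_le_of_bounded
    (((summable_latticePt_sub hw hbound hδ hδ1 b).hasSum.const_smul _).sub
      (hasSum_setIntegral_latticeCube hhi hδ b))
    ((hasSum_setIntegral_latticeCube hw hδ b).mul_left _) fun z => ?_
  exact norm_smul_sub_setIntegral_latticeCube_le hh hhi hw hderiv hδ hδ1 b z

end RiemannSum

lemma one_add_pow_mul_exp_neg_mul_sq_le {a : ℝ} (ha : 0 < a) (M : ℕ) {t : ℝ} (ht : 0 ≤ t) :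
    (1 + t) ^ M * rexp (-a * t ^ 2) ≤ rexp (M ^ 2 / (2 * a) - a / 2 * t ^ 2) := by
  have hlin : (M : ℝ) * t ≤ M ^ 2 / (2 * a) + a / 2 * t ^ 2 := by
    have : M ^ 2 / (2 * a) + a / 2 * t ^ 2 - M * t = (a * t - M) ^ 2 / (2 * a) := by
      field_simp; ring
    nlinarith [div_nonneg (sq_nonneg (a * t - M)) (by positivity : (0:ℝ) ≤ 2 * a)]
  calc (1 + t) ^ M * rexp (-a * t ^ 2) ≤ rexp t ^ M * rexp (-a * t ^ 2) := by
        gcongr; linarith [add_one_le_exp t]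
    _ = rexp (M * t - a * t ^ 2) := by rw [← Real.exp_nat_mul, ← Real.exp_add]; ring_nf
    _ ≤ rexp (M ^ 2 / (2 * a) - a / 2 * t ^ 2) := exp_le_exp.2 (by linarith)

lemma exp_neg_mul_norm_sq_le_of_norm_sub_le {E : Type*} [SeminormedAddCommGroup E] {a r : ℝ}
    (ha : 0 ≤ a) {x y : E} (hxy : ‖x - y‖ ≤ r) :
    rexp (-a * ‖x‖ ^ 2) ≤ rexp (a * r ^ 2 - a / 2 * ‖y‖ ^ 2) := by
  have hy : ‖y‖ ≤ ‖x‖ + r := by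
    have := norm_sub_norm_le y x; rw [norm_sub_rev] at this; linarith
  have hsq : ‖y‖ ^ 2 ≤ 2 * ‖x‖ ^ 2 + 2 * r ^ 2 := by
    nlinarith [norm_nonneg y, sq_nonneg (‖x‖ - r)]
  gcongr
  nlinarith [mul_le_mul_of_nonneg_left hsq ha]

lemma one_add_norm_pow_mul_exp_le_of_norm_sub_le {E : Type*} [SeminormedAddCommGroup E]
    {a r : ℝ} (ha : 0 < a) (M : ℕ) {x y : E} (hxy : ‖x - y‖ ≤ r) :
    (1 + ‖x‖) ^ M * rexp (-a * ‖x‖ ^ 2) ≤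
      rexp (M ^ 2 / (2 * a) + a / 2 * r ^ 2) * rexp (-(a / 4) * ‖y‖ ^ 2) := by
  have hshift := exp_neg_mul_norm_sq_le_of_norm_sub_le (a := a / 2) (by positivity) hxy
  calc (1 + ‖x‖) ^ M * rexp (-a * ‖x‖ ^ 2) ≤ rexp (M ^ 2 / (2 * a) - a / 2 * ‖x‖ ^ 2) :=
        one_add_pow_mul_exp_neg_mul_sq_le ha M (norm_nonneg x)
    _ = rexp (M ^ 2 / (2 * a)) * rexp (-(a / 2) * ‖x‖ ^ 2) := by rw [← Real.exp_add]; ring_nf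
    _ ≤ rexp (M ^ 2 / (2 * a)) * rexp (a / 2 * r ^ 2 - a / 2 / 2 * ‖y‖ ^ 2) := by gcongr
    _ = _ := by rw [← Real.exp_add, ← Real.exp_add]; ring_nf

section GaussianEnvelope

variable {E F : Type*} [NormedAddCommGroup E] [InnerProductSpace ℝ E]
  [NormedAddCommGroup F] [NormedSpace ℝ F]

lemma hasFDerivAt_exp_neg_mul_norm_sq (a : ℝ) (x : E) :
    HasFDerivAt (fun x : E => rexp (-a * ‖x‖ ^ 2))
      ((-(2 * a) * rexp (-a * ‖x‖ ^ 2)) • innerSL ℝ x) x := by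
  convert ((hasStrictFDerivAt_norm_sq x).hasFDerivAt.const_mul (-a)).exp using 1
  ext v
  simp only [smul_apply, smul_eq_mul, nsmul_eq_mul]
  push_cast
  ring

lemma norm_fderiv_exp_neg_mul_norm_sq_smul_le {P : E → F} (hP : Differentiable ℝ P) {a : ℝ}
    (ha : 0 ≤ a) (x : E) :
    ‖fderiv ℝ (fun x => rexp (-a * ‖x‖ ^ 2) • P x) x‖ ≤
      rexp (-a * ‖x‖ ^ 2) * (‖fderiv ℝ P x‖ + 2 * a * ‖x‖ * ‖P x‖) := by
  rw [((hasFDerivAt_exp_neg_mul_norm_sq a x).fun_smul (hP x).hasFDerivAt).fderiv]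
  refine (norm_add_le _ _).trans_eq ?_
  rw [norm_smul, ContinuousLinearMap.norm_smulRight_apply, norm_smul, innerSL_apply_norm,
    Real.norm_of_nonneg (exp_pos _).le, norm_mul, norm_neg, Real.norm_of_nonneg (by positivity),
    Real.norm_of_nonneg (exp_pos _).le]
  ring

theorem exists_gaussian_dominator {P : E → F} (hP : P.HasTemperateGrowth) {a : ℝ} (ha : 0 < a)
    (r : ℝ) : ∃ K, ∀ x y, ‖x - y‖ ≤ r →
      ‖rexp (-a * ‖x‖ ^ 2) • P x‖ ≤ K * rexp (-(a / 4) * ‖y‖ ^ 2) ∧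
      ‖fderiv ℝ (fun x => rexp (-a * ‖x‖ ^ 2) • P x) x‖ ≤ K * rexp (-(a / 4) * ‖y‖ ^ 2) := by
  obtain ⟨k, C, hC, hPk⟩ := hP.norm_iteratedFDeriv_le_uniform 1
  have hval (x : E) : ‖P x‖ ≤ C * (1 + ‖x‖) ^ k := by
    simpa [norm_iteratedFDeriv_zero] using hPk 0 zero_le_one x
  have hder (x : E) : ‖fderiv ℝ P x‖ ≤ C * (1 + ‖x‖) ^ k := by
    simpa [norm_iteratedFDeriv_one] using hPk 1 le_rfl x
  have hP_le (x : E) : ‖P x‖ ≤ C * (1 + 2 * a) * (1 + ‖x‖) ^ (k + 1) := by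
    have hp : 0 ≤ C * (1 + ‖x‖) ^ k := by positivity
    refine (hval x).trans ?_
    rw [pow_succ]; nlinarith [mul_nonneg ha.le hp, mul_nonneg hp (norm_nonneg x),
      mul_nonneg (mul_nonneg ha.le hp) (norm_nonneg x)]
  have hderiv_le (x : E) :
      ‖fderiv ℝ P x‖ + 2 * a * ‖x‖ * ‖P x‖ ≤ C * (1 + 2 * a) * (1 + ‖x‖) ^ (k + 1) := by
    have hp : 0 ≤ C * (1 + ‖x‖) ^ k := by positivity
    calc ‖fderiv ℝ P x‖ + 2 * a * ‖x‖ * ‖P x‖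
        ≤ C * (1 + ‖x‖) ^ k + 2 * a * ‖x‖ * (C * (1 + ‖x‖) ^ k) := by
          gcongr; exacts [hder x, hval x]
      _ ≤ C * (1 + 2 * a) * (1 + ‖x‖) ^ (k + 1) := by
          rw [pow_succ]; nlinarith [mul_nonneg ha.le hp, mul_nonneg hp (norm_nonneg x),
            mul_nonneg (mul_nonneg ha.le hp) (norm_nonneg x)]
  refine ⟨C * (1 + 2 * a) * rexp ((k + 1 : ℕ) ^ 2 / (2 * a) + a / 2 * r ^ 2),
    fun x y hxy => ?_⟩
  have henv := one_add_norm_pow_mul_exp_le_of_norm_sub_le ha (k + 1) hxy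
  have hbound {t : ℝ} (ht : t ≤ C * (1 + 2 * a) * (1 + ‖x‖) ^ (k + 1)) :
      rexp (-a * ‖x‖ ^ 2) * t ≤ C * (1 + 2 * a) *
        rexp ((k + 1 : ℕ) ^ 2 / (2 * a) + a / 2 * r ^ 2) * rexp (-(a / 4) * ‖y‖ ^ 2) :=
    calc _ ≤ rexp (-a * ‖x‖ ^ 2) * (C * (1 + 2 * a) * (1 + ‖x‖) ^ (k + 1)) := by gcongr
      _ = C * (1 + 2 * a) * ((1 + ‖x‖) ^ (k + 1) * rexp (-a * ‖x‖ ^ 2)) := by ring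
      _ ≤ _ := by rw [mul_assoc _ (rexp _)]; gcongr
  refine ⟨?_, (norm_fderiv_exp_neg_mul_norm_sq_smul_le (hP.1.differentiable (by simp))
    ha.le x).trans (hbound (hderiv_le x))⟩
  rw [norm_smul, Real.norm_of_nonneg (exp_pos _).le]
  exact hbound (hP_le x)

end GaussianEnvelope

lemma integrable_exp_neg_mul_norm_sq {V : Type*} [NormedAddCommGroup V] [InnerProductSpace ℝ V]
    [FiniteDimensional ℝ V] [MeasurableSpace V] [BorelSpace V] {a : ℝ} (ha : 0 < a) :
    Integrable fun v : V => rexp (-a * ‖v‖ ^ 2) := by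
  have := (GaussianFourier.integrable_cexp_neg_mul_sq_norm_add (V := V) (b := a)
    (by simpa using ha) 0 0).re
  simpa [← Complex.ofReal_pow, ← Complex.ofReal_mul, ← Complex.ofReal_neg,
    Complex.exp_ofReal_re] using this

lemma hasTemperateGrowth_eval_ofReal {ι : Type*} [Fintype ι] (Q : MvPolynomial ι ℂ) :
    (fun y : EuclideanSpace ℝ ι =>
      MvPolynomial.eval (fun i => ((y i : ℝ) : ℂ)) Q).HasTemperateGrowth := by
  induction Q using MvPolynomial.induction_on with
  | C a => simp
  | add p q hp hq => simpa using hp.fun_add hq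
  | mul_X p i hp =>
    simpa using hp.fun_mul (Complex.ofRealCLM.comp (EuclideanSpace.proj i)).hasTemperateGrowth

noncomputable def polyGaussian {d : ℕ} (a : ℝ) (Q : MvPolynomial (Fin d) ℂ)
    (y : EuclideanSpace ℝ (Fin d)) : ℂ :=
  rexp (-a * ‖y‖ ^ 2) • MvPolynomial.eval (fun i => ((y i : ℝ) : ℂ)) Q

theorem exists_norm_smul_tsum_polyGaussian_sub_integral_le {d : ℕ} {a : ℝ} (ha : 0 < a)
    (Q : MvPolynomial (Fin d) ℂ) : ∃ C, ∀ δ, 0 < δ → δ ≤ 1 → ∀ b,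
      ‖δ ^ d • ∑' z, polyGaussian a Q (latticePt d δ z - b) - ∫ y, polyGaussian a Q y‖ ≤
        C * δ := by
  have hQ := hasTemperateGrowth_eval_ofReal Q
  obtain ⟨K, hK⟩ := exists_gaussian_dominator hQ ha √d
  have hdiff : Differentiable ℝ (polyGaussian a Q) := fun x =>
    (hasFDerivAt_exp_neg_mul_norm_sq a x).differentiableAt.smul
      (hQ.1.differentiable (by simp) x)
  refine ⟨√d * ∫ y : EuclideanSpace ℝ (Fin d), K * rexp (-(a / 4) * ‖y‖ ^ 2),
    fun δ hδ hδ1 b => ?_⟩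
  have := norm_smul_tsum_latticePt_sub_integral_le hdiff
    ((integrable_exp_neg_mul_norm_sq (by positivity)).const_mul K)
    (fun x y hxy => (hK x y hxy).1) (fun x y hxy => (hK x y hxy).2) hδ hδ1 b
  linarith

lemma polyGaussian_inv_sqrt_smul_sub {d : ℕ} {ε : ℝ} (hε : 0 < ε) (a : ℝ)
    (Q : MvPolynomial (Fin d) ℂ) (x x₀ : EuclideanSpace ℝ (Fin d)) :
    polyGaussian a Q ((√ε)⁻¹ • (x - x₀)) =
      MvPolynomial.eval (fun i => (((x i - x₀ i) / √ε : ℝ) : ℂ)) Q *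
        rexp (-a * ‖x - x₀‖ ^ 2 / ε) := by
  have hnorm : ‖(√ε)⁻¹ • (x - x₀)‖ ^ 2 = ‖x - x₀‖ ^ 2 / ε := by
    rw [norm_smul, mul_pow, norm_inv, Real.norm_of_nonneg (sqrt_nonneg ε), inv_pow,
      sq_sqrt hε.le, inv_mul_eq_div]
  rw [polyGaussian, Complex.real_smul, mul_comm, hnorm, mul_div_assoc]
  congr 3
  ext i
  simp [div_eq_inv_mul]

lemma conj_polyGaussian_mul {d : ℕ} (a : ℝ) (p q : MvPolynomial (Fin d) ℂ)
    (y : EuclideanSpace ℝ (Fin d)) :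
    conj (polyGaussian a p y) * polyGaussian a q y =
      polyGaussian (2 * a) (p.map (starRingEnd ℂ) * q) y := by
  have hconj : conj (MvPolynomial.eval (fun i => ((y i : ℝ) : ℂ)) p) =
      MvPolynomial.eval₂ (starRingEnd ℂ) (fun i => ((y i : ℝ) : ℂ)) p := by
    rw [MvPolynomial.eval, MvPolynomial.coe_eval₂Hom, MvPolynomial.eval₂_comp_left]
    simp [Function.comp_def]
  have hexp : rexp (-(2 * a) * ‖y‖ ^ 2) = rexp (-a * ‖y‖ ^ 2) * rexp (-a * ‖y‖ ^ 2) := by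
    rw [← Real.exp_add]; ring_nf
  simp only [polyGaussian, Complex.real_smul, map_mul, Complex.conj_ofReal,
    MvPolynomial.eval_map, hconj, hexp, Complex.ofReal_mul]
  ring

lemma inv_sqrt_smul_latticePt_sub {d : ℕ} {ε : ℝ} (hε : 0 < ε) (x₀ : EuclideanSpace ℝ (Fin d))
    (z : Fin d → ℤ) :
    (√ε)⁻¹ • (latticePt d ε z - x₀) = latticePt d √ε z - (√ε)⁻¹ • x₀ := by
  ext i
  have hε' : ε = √ε * √ε := (mul_self_sqrt hε.le).symm
  simp only [PiLp.smul_apply, PiLp.sub_apply, smul_eq_mul, latticePt_apply]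
  field_simp
  linear_combination (z i : ℝ) * hε'

lemma tsum_sub_integral_inv_sqrt_smul {d : ℕ} {ε : ℝ} (hε : 0 < ε)
    (H : EuclideanSpace ℝ (Fin d) → ℂ) (x₀ : EuclideanSpace ℝ (Fin d)) :
    ∑' z, (ε ^ (-(d : ℝ) / 2) : ℝ) * H ((√ε)⁻¹ • (latticePt d ε z - x₀)) -
        (ε ^ (-(d : ℝ)) : ℝ) * ∫ x, (ε ^ (-(d : ℝ) / 2) : ℝ) * H ((√ε)⁻¹ • (x - x₀)) =
      (ε ^ (-(d : ℝ)) : ℝ) *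
        (√ε ^ d • ∑' z, H (latticePt d √ε z - (√ε)⁻¹ • x₀) - ∫ y, H y) := by
  have hsqrt : √ε ^ d = ε ^ ((d : ℝ) / 2) := by
    rw [sqrt_eq_rpow, ← rpow_natCast, ← rpow_mul hε.le]; ring_nf
  have hsplit : ((ε ^ (-(d : ℝ) / 2) : ℝ) : ℂ) = (ε ^ (-(d : ℝ)) : ℝ) * (√ε ^ d : ℝ) := by
    rw [hsqrt, ← ofReal_mul, ← rpow_add hε]; ring_nf
  have hcancel : ((ε ^ (-(d : ℝ) / 2) : ℝ) : ℂ) * (√ε ^ d : ℝ) = 1 := by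
    rw [hsqrt, ← ofReal_mul, ← rpow_add hε]; ring_nf; simp
  simp_rw [inv_sqrt_smul_latticePt_sub hε]
  rw [tsum_mul_left, integral_const_mul, integral_sub_right_eq_self (fun x => H ((√ε)⁻¹ • x)),
    Measure.integral_comp_inv_smul_of_nonneg volume _ (sqrt_nonneg ε),
    finrank_euclideanSpace_fin, Complex.real_smul, Complex.real_smul]
  linear_combination (∑' z, H (latticePt d √ε z - (√ε)⁻¹ • x₀)) * hsplit -
    ((ε ^ (-(d : ℝ)) : ℝ) * ∫ y, H y) * hcancel

theorem lattice_continuum_inner_product_general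
    (d : ℕ) (x₀ : EuclideanSpace ℝ (Fin d)) (c : ℝ) (hc : 0 < c)
    (qf qg : MvPolynomial (Fin d) ℂ)
    (f g : ℝ → EuclideanSpace ℝ (Fin d) → ℂ)
    (hf : ∀ ε : ℝ, 0 < ε → ∀ x, f ε x =
        (ε ^ (-(d : ℝ) / 4) : ℝ) *
          MvPolynomial.eval (fun i => (((x i - x₀ i) / Real.sqrt ε : ℝ) : ℂ)) qf *
          Real.exp (-c * ‖x - x₀‖ ^ 2 / ε))
    (hg : ∀ ε : ℝ, 0 < ε → ∀ x, g ε x =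
        (ε ^ (-(d : ℝ) / 4) : ℝ) *
          MvPolynomial.eval (fun i => (((x i - x₀ i) / Real.sqrt ε : ℝ) : ℂ)) qg *
          Real.exp (-c * ‖x - x₀‖ ^ 2 / ε)) :
    (fun ε : ℝ =>
        (∑' z : Fin d → ℤ, conj (f ε (latticePt d ε z)) * g ε (latticePt d ε z))
          - (ε ^ (-(d : ℝ)) : ℝ) * ∫ x, conj (f ε x) * g ε x)
      =O[𝓝[>] (0 : ℝ)] fun ε => ε ^ ((1 : ℝ) / 2 - d) := by
  obtain ⟨C, hC⟩ := exists_norm_smul_tsum_polyGaussian_sub_integral_le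
    (by positivity : 0 < 2 * c) (qf.map (starRingEnd ℂ) * qg)
  refine Asymptotics.IsBigO.of_bound C ?_
  filter_upwards [Ioc_mem_nhdsGT one_pos] with ε ⟨hε, hε1⟩
  have hfg (x : EuclideanSpace ℝ (Fin d)) : conj (f ε x) * g ε x = (ε ^ (-(d : ℝ) / 2) : ℝ) *
      polyGaussian (2 * c) (qf.map (starRingEnd ℂ) * qg) ((√ε)⁻¹ • (x - x₀)) := by
    rw [hf ε hε, hg ε hε, mul_assoc, mul_assoc, ← polyGaussian_inv_sqrt_smul_sub hε,
      ← polyGaussian_inv_sqrt_smul_sub hε, map_mul, conj_ofReal, mul_mul_mul_comm,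
      conj_polyGaussian_mul, ← ofReal_mul, ← rpow_add hε]
    ring_nf
  simp_rw [hfg]
  rw [tsum_sub_integral_inv_sqrt_smul hε, norm_mul, Complex.norm_real,
    Real.norm_of_nonneg (by positivity), Real.norm_of_nonneg (by positivity)]
  calc ε ^ (-(d : ℝ)) * ‖_‖ ≤ ε ^ (-(d : ℝ)) * (C * √ε) := by
        gcongr; exact hC √ε (sqrt_pos.2 hε) (sqrt_le_one.2 hε1) ((√ε)⁻¹ • x₀)
    _ = C * ε ^ ((1 : ℝ) / 2 - d) := by
        rw [sqrt_eq_rpow, sub_eq_neg_add, rpow_add hε]; ring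

/-- Comparison of lattice and continuum inner products for ε-scaled Gaussian-type
functions: `⟨f^ε, g^ε⟩_{ℓ²((εℤ)^d)} = ε^{−d} ( ⟨f,g⟩_{L²} + O(√ε) )` as `ε → 0⁺`. -/
theorem lattice_continuum_inner_product
    (d : ℕ) (x₀ : EuclideanSpace ℝ (Fin d)) (c : ℝ) (hc : 0 < c)
    (qf qg : MvPolynomial (Fin d) ℂ)
    (f g : ℝ → EuclideanSpace ℝ (Fin d) → ℂ)
    (hf : ∀ ε : ℝ, 0 < ε → ∀ x, f ε x =
        (ε ^ (-(d : ℝ) / 4) : ℝ) *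
          MvPolynomial.eval (fun i => (((x i - x₀ i) / Real.sqrt ε : ℝ) : ℂ)) qf *
          Real.exp (-c * ‖x - x₀‖ ^ 2 / ε))
    (hg : ∀ ε : ℝ, 0 < ε → ∀ x, g ε x =
        (ε ^ (-(d : ℝ) / 4) : ℝ) *
          MvPolynomial.eval (fun i => (((x i - x₀ i) / Real.sqrt ε : ℝ) : ℂ)) qg *
          Real.exp (-c * ‖x - x₀‖ ^ 2 / ε))
    (hfnorm : ∀ ε : ℝ, 0 < ε → ε ≤ 1 → ∫ x, ‖f ε x‖ ^ 2 = 1)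
    (hgnorm : ∀ ε : ℝ, 0 < ε → ε ≤ 1 → ∫ x, ‖g ε x‖ ^ 2 = 1) :
    (fun ε : ℝ =>
        (∑' z : Fin d → ℤ, conj (f ε (latticePt d ε z)) * g ε (latticePt d ε z))
          - (ε ^ (-(d : ℝ)) : ℝ) * ∫ x, conj (f ε x) * g ε x)
      =O[𝓝[>] (0 : ℝ)] fun ε => ε ^ ((1 : ℝ) / 2 - d) :=
  lattice_continuum_inner_product_general d x₀ c hc qf qg f g hf hg
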